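/- arXiv:1804.03761 — 8 statements merged into one kernel-verified Lean document; each statement's English description precedes it below -/
import Mathlib

section
/- Let 𝒳 be a nonempty finite set, f : 𝒳 → ℝ, η ∈ [0,1], and T a positive integer. Let p⁽⁰⁾ be the uniform distribution on 𝒳 and for t = 1,…,T let α⁽ᵗ⁾ ∈ ℝ satisfy (i) min_{x∈𝒳} f(x) ≤ α⁽ᵗ⁾ and (ii) Σ_{x : f(x) > α⁽ᵗ⁾} p⁽ᵗ⁻¹⁾(x) ≥ 1/2, and define p⁽ᵗ⁾(x) = p⁽ᵗ⁻¹⁾(x)(1 − η·1{f(x) > α⁽ᵗ⁾}) / Σ_{y∈𝒳} p⁽ᵗ⁻¹⁾(y)(1 − η·1{f(y) > α⁽ᵗ⁾}). Then log Σ_{x : f(x) = min_{y∈𝒳} f(y)} p⁽ᵀ⁾(x) ≥ min( T·log(2/(2−η)) − log|𝒳|, 0 ). -/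
open Finset
open scoped Classical

/-!
Every round keeps the minimizers of `f` out of the downweighted superlevel set, while that set
carries at least half the mass. The normalizing constant is therefore at most `1 - η / 2`, so
the mass of the minimizers grows by a factor of at least `2 / (2 - η)` per round, starting from
at least `1 / |𝒳|`. Taking logarithms gives the first term of the minimum.
-/

namespace MultiplicativeWeights

variable {X : Type*}

def damping (η : ℝ) (P : X → Prop) [DecidablePred P] : X → ℝ :=
  fun x => 1 - η * if P x then 1 else 0

section Damping

variable {η : ℝ} {P : X → Prop} [DecidablePred P]

theorem damping_nonneg (hη : η ∈ Set.Icc (0 : ℝ) 1) (x : X) : 0 ≤ damping η P x := by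
  unfold damping
  split_ifs <;> linarith [hη.2]

theorem damping_of_not {x : X} (hx : ¬ P x) : damping η P x = 1 := by
  simp [damping, hx]

variable [Fintype X]

theorem sum_mul_damping (p : X → ℝ) :
    ∑ y, p y * damping η P y = ∑ y, p y - η * ∑ y ∈ univ.filter P, p y := by
  rw [Finset.sum_filter, Finset.mul_sum, ← Finset.sum_sub_distrib]
  refine Finset.sum_congr rfl fun y _ => ?_
  unfold damping
  split_ifs <;> ring

theorem sum_mul_damping_le {p : X → ℝ} (hp : p ∈ stdSimplex ℝ X) (hη : 0 ≤ η)
    (hP : 1 / 2 ≤ ∑ y ∈ univ.filter P, p y) :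
    ∑ y, p y * damping η P y ≤ (2 - η) / 2 := by
  rw [sum_mul_damping, hp.2]
  nlinarith

end Damping

variable [Fintype X]

noncomputable def reweight (p w : X → ℝ) : X → ℝ :=
  fun x => p x * w x / ∑ y, p y * w y

theorem reweight_mem_stdSimplex {p w : X → ℝ} (hp : ∀ x, 0 ≤ p x) (hw : ∀ x, 0 ≤ w x)
    (hZ : 0 < ∑ y, p y * w y) : reweight p w ∈ stdSimplex ℝ X := by
  refine ⟨fun x => div_nonneg (mul_nonneg (hp x) (hw x)) hZ.le, ?_⟩
  show ∑ x, p x * w x / _ = 1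
  rw [← Finset.sum_div, div_self hZ.ne']

theorem sum_reweight (p w : X → ℝ) (s : Finset X) :
    ∑ x ∈ s, reweight p w x = (∑ x ∈ s, p x * w x) / ∑ y, p y * w y :=
  (Finset.sum_div _ _ _).symm

theorem reweight_damping_step {η : ℝ} {P : X → Prop} [DecidablePred P] {p : X → ℝ}
    (hp : p ∈ stdSimplex ℝ X) (hη : η ∈ Set.Icc (0 : ℝ) 1)
    (hP : 1 / 2 ≤ ∑ y ∈ univ.filter P, p y)
    {A : Finset X} (hA : ∀ x ∈ A, ¬ P x) (hpA : 0 < ∑ x ∈ A, p x) :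
    reweight p (damping η P) ∈ stdSimplex ℝ X ∧
      2 / (2 - η) * ∑ x ∈ A, p x ≤ ∑ x ∈ A, reweight p (damping η P) x := by
  have hmassA : ∑ x ∈ A, p x * damping η P x = ∑ x ∈ A, p x :=
    Finset.sum_congr rfl fun x hx => by rw [damping_of_not (hA x hx), mul_one]
  have hZA : ∑ x ∈ A, p x ≤ ∑ y, p y * damping η P y := by
    rw [← hmassA]
    exact Finset.sum_le_sum_of_subset_of_nonneg (Finset.subset_univ A)
      fun y _ _ => mul_nonneg (hp.1 y) (damping_nonneg hη y)
  have hZ : 0 < ∑ y, p y * damping η P y := hpA.trans_le hZA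
  refine ⟨reweight_mem_stdSimplex hp.1 (damping_nonneg hη) hZ, ?_⟩
  rw [sum_reweight, hmassA, mul_comm, ← mul_div_assoc, ← div_div_eq_mul_div]
  exact div_le_div_of_nonneg_left hpA.le hZ (sum_mul_damping_le hp hη.1 hP)

theorem pow_mul_sum_le_sum_of_reweight_damping {η : ℝ} (hη : η ∈ Set.Icc (0 : ℝ) 1)
    {P : ℕ → X → Prop} [∀ t, DecidablePred (P t)] {p : ℕ → X → ℝ} {T : ℕ}
    (hrec : ∀ t < T, p (t + 1) = reweight (p t) (damping η (P t)))
    (hP : ∀ t < T, 1 / 2 ≤ ∑ y ∈ univ.filter (P t), p t y)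
    (hp0 : p 0 ∈ stdSimplex ℝ X) {A : Finset X} (hA : ∀ t < T, ∀ x ∈ A, ¬ P t x)
    (hpA : 0 < ∑ x ∈ A, p 0 x) :
    (2 / (2 - η)) ^ T * ∑ x ∈ A, p 0 x ≤ ∑ x ∈ A, p T x := by
  have hr : 0 < 2 / (2 - η) := div_pos two_pos (by linarith [hη.2])
  suffices ∀ t ≤ T, p t ∈ stdSimplex ℝ X ∧
      (2 / (2 - η)) ^ t * ∑ x ∈ A, p 0 x ≤ ∑ x ∈ A, p t x from (this T le_rfl).2
  intro t ht
  induction t with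
  | zero => exact ⟨hp0, by rw [pow_zero, one_mul]⟩
  | succ t ih =>
    obtain ⟨hpt, hmass⟩ := ih (by omega)
    obtain ⟨hq, hgrow⟩ := reweight_damping_step hpt hη (hP t ht) (hA t ht)
      ((by positivity : (0 : ℝ) < _).trans_le hmass)
    refine hrec t ht ▸ ⟨hq, ?_⟩
    calc (2 / (2 - η)) ^ (t + 1) * ∑ x ∈ A, p 0 x
        = 2 / (2 - η) * ((2 / (2 - η)) ^ t * ∑ x ∈ A, p 0 x) := by ring
      _ ≤ 2 / (2 - η) * ∑ x ∈ A, p t x := by gcongr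
      _ ≤ _ := hgrow

end MultiplicativeWeights

open MultiplicativeWeights in
theorem stmt0_general {X : Type*} [Fintype X] [Nonempty X]
    (f : X → ℝ) (η : ℝ) (hη : η ∈ Set.Icc (0 : ℝ) 1)
    (T : ℕ)
    (p : ℕ → X → ℝ) (α : ℕ → ℝ)
    (hp0 : ∀ x, p 0 x = 1 / (Fintype.card X : ℝ))
    (hα1 : ∀ t < T, Finset.univ.inf' Finset.univ_nonempty f ≤ α (t + 1))
    (hα2 : ∀ t < T,
      (1 : ℝ) / 2 ≤ ∑ x ∈ Finset.univ.filter (fun x => α (t + 1) < f x), p t x)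
    (hrec : ∀ t < T, ∀ x, p (t + 1) x =
      p t x * (1 - η * (if α (t + 1) < f x then (1 : ℝ) else 0)) /
        ∑ y, p t y * (1 - η * (if α (t + 1) < f y then (1 : ℝ) else 0))) :
    Real.log (∑ x ∈ Finset.univ.filter
        (fun x => f x = Finset.univ.inf' Finset.univ_nonempty f), p T x)
      ≥ min ((T : ℝ) * Real.log (2 / (2 - η)) - Real.log (Fintype.card X)) 0 := by
  set A := univ.filter fun x => f x = univ.inf' univ_nonempty f
  have hr : 0 < 2 / (2 - η) := div_pos two_pos (by linarith [hη.2])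
  have hp0_mem : p 0 ∈ stdSimplex ℝ X :=
    (funext fun x => by simp [hp0] : p 0 = (stdSimplex.barycenter : stdSimplex ℝ X).val) ▸
      stdSimplex.barycenter.2
  have hpA : 1 / (Fintype.card X : ℝ) ≤ ∑ x ∈ A, p 0 x := by
    obtain ⟨x₀, -, hx₀⟩ := exists_mem_eq_inf' univ_nonempty f
    rw [← hp0 x₀]
    exact single_le_sum (fun x _ => hp0_mem.1 x) (mem_filter.2 ⟨mem_univ _, hx₀.symm⟩)
  have hgrowth := pow_mul_sum_le_sum_of_reweight_damping hη
    (P := fun t x => α (t + 1) < f x) (A := A) (fun t ht => funext (hrec t ht))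
    hα2 hp0_mem (fun t ht x hx => not_lt.2 ((mem_filter.1 hx).2 ▸ hα1 t ht))
    ((by positivity : (0 : ℝ) < _).trans_le hpA)
  calc min ((T : ℝ) * Real.log (2 / (2 - η)) - Real.log (Fintype.card X)) 0
      ≤ Real.log ((2 / (2 - η)) ^ T * (1 / Fintype.card X)) := by
        rw [Real.log_mul (by positivity) (by positivity), Real.log_pow, one_div, Real.log_inv]
        exact min_le_left _ _
    _ ≤ Real.log (∑ x ∈ A, p T x) :=
        Real.log_le_log (by positivity) ((by gcongr : _ ≤ _ * ∑ x ∈ A, p 0 x).trans hgrowth)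

/-- cutting-plane bound for exact sublevel-set classification.
`p 0` is uniform on a nonempty finite set `𝒳`; at each round `t+1`, the
threshold `α (t+1)` is at least the minimum of `f` and the superlevel set
`{x : f x > α (t+1)}` has mass at least `1/2` under `p t`; the
multiplicative-weights update downweights the superlevel set by `1 - η`.
Then the final mass of the set of minimizers satisfies the stated bound. -/
theorem stmt0 {X : Type*} [Fintype X] [Nonempty X]
    (f : X → ℝ) (η : ℝ) (hη : η ∈ Set.Icc (0 : ℝ) 1)
    (T : ℕ) (hT : 0 < T)
    (p : ℕ → X → ℝ) (α : ℕ → ℝ)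
    (hp0 : ∀ x, p 0 x = 1 / (Fintype.card X : ℝ))
    (hα1 : ∀ t < T, Finset.univ.inf' Finset.univ_nonempty f ≤ α (t + 1))
    (hα2 : ∀ t < T,
      (1 : ℝ) / 2 ≤ ∑ x ∈ Finset.univ.filter (fun x => α (t + 1) < f x), p t x)
    (hrec : ∀ t < T, ∀ x, p (t + 1) x =
      p t x * (1 - η * (if α (t + 1) < f x then (1 : ℝ) else 0)) /
        ∑ y, p t y * (1 - η * (if α (t + 1) < f y then (1 : ℝ) else 0))) :
    Real.log (∑ x ∈ Finset.univ.filter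
        (fun x => f x = Finset.univ.inf' Finset.univ_nonempty f), p T x)
      ≥ min ((T : ℝ) * Real.log (2 / (2 - η)) - Real.log (Fintype.card X)) 0 :=
  stmt0_general f η hη T p α hp0 hα1 hα2 hrec
end

section
/- Let 𝒳 be a nonempty finite set, T a positive integer, η ∈ [0,1/2], and γ > 0. Let h⁽¹⁾,…,h⁽ᵀ⁾ : 𝒳 → [0,1], let p⁽⁰⁾ be the uniform distribution on 𝒳, and for each t define p⁽ᵗ⁾(x) = p⁽ᵗ⁻¹⁾(x)(1 − η h⁽ᵗ⁾(x)) / Σ_{y∈𝒳} p⁽ᵗ⁻¹⁾(y)(1 − η h⁽ᵗ⁾(y)). Assume that Σ_{x∈𝒳} h⁽ᵗ⁾(x) p⁽ᵗ⁻¹⁾(x) ≥ γ for every t ∈ {1,…,T}, and set M_T(x) = Σ_{t=1}^T h⁽ᵗ⁾(x). Then for every x ∈ 𝒳: log p⁽ᵀ⁾(x) ≥ (γη/(η+2))·T − η(η+1)·M_T(x) − log(2|𝒳|). -/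
open Finset

lemma log_one_sub_lb {u : ℝ} (h0 : 0 ≤ u) (h2 : u ≤ 1 / 2) :
    -u - u ^ 2 ≤ Real.log (1 - u) := by
  have h1 : (0 : ℝ) < 1 - u := by linarith
  rw [Real.le_log_iff_exp_le h1]
  have hx : (0 : ℝ) ≤ u + u ^ 2 := by positivity
  have hq := Real.quadratic_le_exp_of_nonneg hx
  have hQpos : (0 : ℝ) < 1 + (u + u ^ 2) + (u + u ^ 2) ^ 2 / 2 := by positivity
  have h5 : Real.exp (-u - u ^ 2) ≤ 1 / (1 + (u + u ^ 2) + (u + u ^ 2) ^ 2 / 2) := by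
    rw [show -u - u ^ 2 = -(u + u ^ 2) by ring, Real.exp_neg, ← one_div]
    exact one_div_le_one_div_of_le hQpos hq
  have h6 : 1 / (1 + (u + u ^ 2) + (u + u ^ 2) ^ 2 / 2) ≤ 1 - u := by
    rw [div_le_iff₀ hQpos]
    nlinarith
  linarith

/-- Theorem 1, cutting plane style bound: for the
multiplicative-weights process `p (t+1) x ∝ p t x * (1 - η * h (t+1) x)`
started from the uniform distribution on a nonempty finite set `𝒳`, if each
classifier `h (t+1)` has coverage `∑ x, h (t+1) x * p t x ≥ γ`, then for every
`x`, `log p T x ≥ (γη/(η+2)) T − η(η+1) M_T(x) − log(2|𝒳|)` where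
`M_T x = ∑_{t=1}^T h t x`. -/
theorem stmt1 {X : Type*} [Fintype X] [Nonempty X]
    (T : ℕ) (hT : 0 < T)
    (η γ : ℝ) (hη : η ∈ Set.Icc (0 : ℝ) (1 / 2)) (hγ : 0 < γ)
    (h : ℕ → X → ℝ) (hh : ∀ t x, h t x ∈ Set.Icc (0 : ℝ) 1)
    (p : ℕ → X → ℝ)
    (hp0 : ∀ x, p 0 x = 1 / (Fintype.card X : ℝ))
    (hrec : ∀ t < T, ∀ x, p (t + 1) x =
      p t x * (1 - η * h (t + 1) x) / ∑ y, p t y * (1 - η * h (t + 1) y))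
    (hcov : ∀ t < T, γ ≤ ∑ x, h (t + 1) x * p t x) :
    ∀ x : X, Real.log (p T x)
      ≥ γ * η / (η + 2) * T - η * (η + 1) * (∑ t ∈ Finset.Icc 1 T, h t x)
        - Real.log (2 * Fintype.card X) := by
  obtain ⟨hη0, hη2⟩ := hη
  have hN : (0 : ℝ) < (Fintype.card X : ℝ) := by
    exact_mod_cast Fintype.card_pos
  have main : ∀ t, t ≤ T → (∀ x, 0 < p t x) ∧ (∑ x, p t x = 1) ∧
      ∀ x, γ * η / (η + 2) * t - η * (η + 1) * (∑ s ∈ Finset.Icc 1 t, h s x)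
        - Real.log (Fintype.card X) ≤ Real.log (p t x) := by
    intro t
    induction t with
    | zero =>
      intro _
      refine ⟨fun x => by rw [hp0]; positivity, ?_, fun x => ?_⟩
      · simp [hp0, Finset.sum_const, Fintype.card_pos.ne', mul_one_div]
      · rw [hp0]
        simp [Real.log_div, hN.ne']
    | succ t ih =>
      intro ht1
      have ht : t < T := ht1
      obtain ⟨hpos, hsum, hlog⟩ := ih (le_of_lt ht)
      set C := ∑ y, h (t + 1) y * p t y with hC
      have hC1 : C ≤ 1 := by
        rw [← hsum]
        apply Finset.sum_le_sum
        intro y _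
        have := hh (t + 1) y
        nlinarith [(hpos y).le, this.1, this.2]
      have hCγ : γ ≤ C := hcov t ht
      set Z := ∑ y, p t y * (1 - η * h (t + 1) y) with hZ
      have hZval : Z = 1 - η * C := by
        have hexp : ∑ y, p t y * (1 - η * h (t + 1) y)
            = (∑ y, p t y) - η * ∑ y, h (t + 1) y * p t y := by
          rw [Finset.mul_sum, ← Finset.sum_sub_distrib]
          exact Finset.sum_congr rfl fun y _ => by ring
        rw [hZ, hC, hexp, hsum]
      have hZpos : (0 : ℝ) < Z := by
        rw [hZval]; nlinarith
      have hfac : ∀ x, 0 < 1 - η * h (t + 1) x := by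
        intro x
        have := hh (t + 1) x
        nlinarith [this.1, this.2]
      refine ⟨fun x => by
        rw [hrec t ht x]; exact div_pos (mul_pos (hpos x) (hfac x)) hZpos, ?_, fun x => ?_⟩
      · have : ∑ x, p (t + 1) x = (∑ x, p t x * (1 - η * h (t + 1) x)) / Z := by
          rw [Finset.sum_div]
          exact Finset.sum_congr rfl fun x _ => hrec t ht x
        rw [this, ← hZ, div_self hZpos.ne']
      · rw [hrec t ht x, Real.log_div (mul_pos (hpos x) (hfac x)).ne' hZpos.ne',
          Real.log_mul (hpos x).ne' (hfac x).ne']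
        have hlogZ : Real.log Z ≤ -(γ * η / (η + 2)) := by
          have h1 : Real.log Z ≤ Z - 1 := Real.log_le_sub_one_of_pos hZpos
          have h2 : Z - 1 = -(η * C) := by rw [hZval]; ring
          have h3 : γ * η / (η + 2) ≤ γ * η := by
            apply div_le_self (by positivity)
            linarith
          nlinarith
        have hlog1 : -(η * (η + 1)) * h (t + 1) x ≤ Real.log (1 - η * h (t + 1) x) := by
          have hhx := hh (t + 1) x
          have h0u : 0 ≤ η * h (t + 1) x := by nlinarith [hhx.1]
          have h2u : η * h (t + 1) x ≤ 1 / 2 := by nlinarith [hhx.1, hhx.2]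
          have hlb := log_one_sub_lb h0u h2u
          have hh2 : h (t + 1) x ^ 2 ≤ h (t + 1) x := by nlinarith [hhx.1, hhx.2]
          have hsq : (η * h (t + 1) x) ^ 2 ≤ η ^ 2 * h (t + 1) x := by
            nlinarith [mul_le_mul_of_nonneg_left hh2 (sq_nonneg η)]
          nlinarith [hlb, hsq]
        have hS : (∑ s ∈ Finset.Icc 1 (t + 1), h s x)
            = (∑ s ∈ Finset.Icc 1 t, h s x) + h (t + 1) x := by
          rw [Finset.sum_Icc_succ_top (by omega)]
        rw [hS]
        have := hlog x
        push_cast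
        linarith
  obtain ⟨_, _, hfin⟩ := main T le_rfl
  intro x
  have h2N : Real.log (Fintype.card X : ℝ) ≤ Real.log (2 * (Fintype.card X : ℝ)) := by
    apply Real.log_le_log hN
    linarith
  have := hfin x
  push_cast at this ⊢
  linarith
end

section
/- Let 𝒳 be a nonempty finite set, T a positive integer, η ∈ (0,1/2], and γ > 0. Let h⁽¹⁾,…,h⁽ᵀ⁾ : 𝒳 → [0,1], let p⁽⁰⁾ be the uniform distribution on 𝒳, and for each t define p⁽ᵗ⁾(x) = p⁽ᵗ⁻¹⁾(x)(1 − η h⁽ᵗ⁾(x)) / Σ_{y∈𝒳} p⁽ᵗ⁻¹⁾(y)(1 − η h⁽ᵗ⁾(y)), where Σ_{x∈𝒳} h⁽ᵗ⁾(x) p⁽ᵗ⁻¹⁾(x) ≥ γ for every t. Then for every ν > 0, the set S = {x ∈ 𝒳 : Σ_{t=1}^T h⁽ᵗ⁾(x) < νT} satisfies |S| ≤ |𝒳| · exp(−γηT + νηT + νη²T). -/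
open Finset
open scoped Classical

/-!
With unnormalised weights `w t x = ∏_{s ≤ t} (1 - η h s x)` the process is `p t = w t / Φ t`,
`Φ t = ∑ₓ w t x`. Coverage gives `Φ (t+1) = Φ t (1 - η ∑ₓ h (t+1) x p t x) ≤ e^{-ηγ} Φ t`, so
`Φ T ≤ |𝒳| e^{-ηγT}`. Conversely `1 - u ≥ e^{-(u+u²)}` on `[0, 1/2]` and `h² ≤ h` give
`w T x ≥ e^{-(η+η²) ∑ₜ h t x} ≥ e^{-(η+η²)νT}` for `x ∈ S`, and summing over `S` bounds `|S|`.
-/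

namespace Real

theorem exp_neg_add_sq_le_one_sub {u : ℝ} (h0 : 0 ≤ u) (h1 : u ≤ 1 / 2) :
    exp (-(u + u ^ 2)) ≤ 1 - u := by
  -- `exp (u + u²) ≥ 1 + (u + u²) + (u + u²)² / 2`, and this times `1 - u` is `≥ 1` on `[0, 1/2]`.
  have hq := quadratic_le_exp_of_nonneg (by positivity : 0 ≤ u + u ^ 2)
  have hprod : 1 ≤ exp (u + u ^ 2) * (1 - u) := by
    nlinarith [mul_nonneg (mul_nonneg h0 h0) (by nlinarith : (0 : ℝ) ≤ 1 - u - u ^ 2 - u ^ 3)]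
  rw [exp_neg, inv_le_iff_one_le_mul₀' (exp_pos _)]
  exact hprod

end Real

theorem sum_mul_one_sub_le_exp_mul_sum {X : Type*} (s : Finset X) (w a : X → ℝ) {η γ : ℝ}
    (hη : 0 ≤ η) (hw : 0 < ∑ x ∈ s, w x)
    (hcov : γ ≤ ∑ x ∈ s, a x * (w x / ∑ y ∈ s, w y)) :
    ∑ x ∈ s, w x * (1 - η * a x) ≤ Real.exp (-(η * γ)) * ∑ x ∈ s, w x := by
  have hcov' : γ * ∑ x ∈ s, w x ≤ ∑ x ∈ s, a x * w x := by
    simp_rw [mul_div_assoc', ← sum_div] at hcov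
    rwa [le_div_iff₀ hw] at hcov
  calc ∑ x ∈ s, w x * (1 - η * a x) = ∑ x ∈ s, w x - η * ∑ x ∈ s, a x * w x := by
        rw [mul_sum, ← sum_sub_distrib]; exact sum_congr rfl fun x _ => by ring
    _ ≤ (1 - η * γ) * ∑ x ∈ s, w x := by nlinarith
    _ ≤ Real.exp (-(η * γ)) * ∑ x ∈ s, w x := by
        gcongr; linarith [Real.add_one_le_exp (-(η * γ))]

theorem card_le_div_of_le_of_sum_le {X : Type*} [Fintype X] {s : Finset X} {w : X → ℝ}
    {c B : ℝ} (hw : ∀ x, 0 ≤ w x) (hc : 0 < c) (hs : ∀ x ∈ s, c ≤ w x)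
    (hB : ∑ x, w x ≤ B) : (s.card : ℝ) ≤ B / c := by
  rw [le_div_iff₀ hc]
  calc (s.card : ℝ) * c = s.card • c := (nsmul_eq_mul _ _).symm
    _ ≤ ∑ x ∈ s, w x := card_nsmul_le_sum s w c hs
    _ ≤ ∑ x, w x := sum_le_sum_of_subset_of_nonneg (subset_univ s) fun x _ _ => hw x
    _ ≤ B := hB

section MultiplicativeWeights

variable {X : Type*} (η : ℝ) (h : ℕ → X → ℝ)

noncomputable def mwWeight (t : ℕ) (x : X) : ℝ :=
  ∏ s ∈ Icc 1 t, (1 - η * h s x)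

@[simp]
theorem mwWeight_zero (x : X) : mwWeight η h 0 x = 1 := by
  simp [mwWeight]

theorem mwWeight_succ (t : ℕ) (x : X) :
    mwWeight η h (t + 1) x = mwWeight η h t x * (1 - η * h (t + 1) x) :=
  prod_Icc_succ_top (by omega) _

variable {η h}

theorem mwWeight_pos (hfac : ∀ s x, η * h s x < 1) (t : ℕ) (x : X) : 0 < mwWeight η h t x :=
  prod_pos fun s _ => sub_pos.2 (hfac s x)

theorem exp_neg_mul_sum_le_mwWeight (hη : η ∈ Set.Icc (0 : ℝ) (1 / 2))
    (hh : ∀ t x, h t x ∈ Set.Icc (0 : ℝ) 1) (t : ℕ) (x : X) :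
    Real.exp (-((η + η ^ 2) * ∑ s ∈ Icc 1 t, h s x)) ≤ mwWeight η h t x := by
  rw [mul_sum, ← sum_neg_distrib, Real.exp_sum]
  refine prod_le_prod (fun s _ => (Real.exp_pos _).le) fun s _ => ?_
  obtain ⟨hη0, hη1⟩ := hη
  obtain ⟨hh0, hh1⟩ := hh s x
  calc Real.exp (-((η + η ^ 2) * h s x))
      ≤ Real.exp (-(η * h s x + (η * h s x) ^ 2)) := by
        gcongr
        nlinarith [mul_nonneg (mul_nonneg (sq_nonneg η) hh0) (sub_nonneg.2 hh1)]
    _ ≤ 1 - η * h s x :=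
        Real.exp_neg_add_sq_le_one_sub (by positivity) (by nlinarith)

theorem sum_mwWeight_pos [Fintype X] [Nonempty X] (hfac : ∀ s x, η * h s x < 1) (t : ℕ) :
    0 < ∑ x, mwWeight η h t x :=
  sum_pos (fun x _ => mwWeight_pos hfac t x) univ_nonempty

theorem mw_eq_mwWeight_div_sum [Fintype X] [Nonempty X] (hfac : ∀ s x, η * h s x < 1) {T : ℕ}
    {p : ℕ → X → ℝ} (hp0 : ∀ x, p 0 x = 1 / (Fintype.card X : ℝ))
    (hrec : ∀ t < T, ∀ x, p (t + 1) x =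
      p t x * (1 - η * h (t + 1) x) / ∑ y, p t y * (1 - η * h (t + 1) y)) :
    ∀ t ≤ T, ∀ x, p t x = mwWeight η h t x / ∑ y, mwWeight η h t y := by
  intro t
  induction t with
  | zero => simp [hp0]
  | succ t ih =>
    intro htT x
    have hp := ih (by omega)
    have hZ := sum_mwWeight_pos hfac t
    have hden : ∑ y, p t y * (1 - η * h (t + 1) y) =
        (∑ y, mwWeight η h (t + 1) y) / ∑ y, mwWeight η h t y := by
      rw [sum_div]
      exact sum_congr rfl fun y _ => by rw [hp y, mwWeight_succ]; ring
    rw [hrec t (by omega), hden, hp, mwWeight_succ]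
    field_simp

end MultiplicativeWeights

theorem stmt3_general {X : Type*} [Fintype X] [Nonempty X]
    (T : ℕ)
    (η γ : ℝ) (hη : η ∈ Set.Ioc (0 : ℝ) (1 / 2))
    (h : ℕ → X → ℝ) (hh : ∀ t x, h t x ∈ Set.Icc (0 : ℝ) 1)
    (p : ℕ → X → ℝ)
    (hp0 : ∀ x, p 0 x = 1 / (Fintype.card X : ℝ))
    (hrec : ∀ t < T, ∀ x, p (t + 1) x =
      p t x * (1 - η * h (t + 1) x) / ∑ y, p t y * (1 - η * h (t + 1) y))
    (hcov : ∀ t < T, γ ≤ ∑ x, h (t + 1) x * p t x)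
    (ν : ℝ) :
    ((Finset.univ.filter
        (fun x : X => ∑ t ∈ Finset.Icc 1 T, h t x < ν * T)).card : ℝ)
      ≤ (Fintype.card X : ℝ) *
          Real.exp (-γ * η * T + ν * η * T + ν * η ^ 2 * T) := by
  have hfac : ∀ s x, η * h s x < 1 := fun s x => by
    nlinarith [hη.1, hη.2, (hh s x).1, (hh s x).2]
  have hp := mw_eq_mwWeight_div_sum hfac hp0 hrec
  have hdecay : ∀ t < T, ∑ x, mwWeight η h (t + 1) x ≤
      Real.exp (-(η * γ)) * ∑ x, mwWeight η h t x := fun t ht => by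
    simp only [mwWeight_succ]
    exact sum_mul_one_sub_le_exp_mul_sum _ _ _ hη.1.le (sum_mwWeight_pos hfac t)
      (by simpa only [hp t ht.le] using hcov t ht)
  have hZT : ∑ x, mwWeight η h T x ≤ Fintype.card X * Real.exp (-(η * γ) * T) := by
    have := le_geom (u := fun t => ∑ x, mwWeight η h t x) (Real.exp_pos _).le T hdecay
    simpa [← Real.exp_nat_mul, mul_comm] using this
  have hlow : ∀ x ∈ univ.filter (fun x : X => ∑ t ∈ Icc 1 T, h t x < ν * T),
      Real.exp (-((η + η ^ 2) * (ν * T))) ≤ mwWeight η h T x := fun x hx => by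
    refine le_trans ?_ (exp_neg_mul_sum_le_mwWeight (Set.Ioc_subset_Icc_self hη) hh T x)
    have : 0 ≤ η + η ^ 2 := by nlinarith [hη.1]
    gcongr
    exact (mem_filter.1 hx).2.le
  calc _ ≤ Fintype.card X * Real.exp (-(η * γ) * T) / Real.exp (-((η + η ^ 2) * (ν * T))) :=
        card_le_div_of_le_of_sum_le (fun x => (mwWeight_pos hfac T x).le) (Real.exp_pos _) hlow hZT
    _ = _ := by rw [mul_div_assoc, ← Real.exp_sub]; ring_nf

/-- in the multiplicative-weights process with coverage at least
`γ` at each round, the set `S = {x : ∑_{t=1}^T h t x < ν T}` of rarely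
downweighted points satisfies `|S| ≤ |𝒳| · exp(−γηT + νηT + νη²T)`. -/
theorem stmt3 {X : Type*} [Fintype X] [Nonempty X]
    (T : ℕ) (hT : 0 < T)
    (η γ : ℝ) (hη : η ∈ Set.Ioc (0 : ℝ) (1 / 2)) (hγ : 0 < γ)
    (h : ℕ → X → ℝ) (hh : ∀ t x, h t x ∈ Set.Icc (0 : ℝ) 1)
    (p : ℕ → X → ℝ)
    (hp0 : ∀ x, p 0 x = 1 / (Fintype.card X : ℝ))
    (hrec : ∀ t < T, ∀ x, p (t + 1) x =
      p t x * (1 - η * h (t + 1) x) / ∑ y, p t y * (1 - η * h (t + 1) y))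
    (hcov : ∀ t < T, γ ≤ ∑ x, h (t + 1) x * p t x)
    (ν : ℝ) (hν : 0 < ν) :
    ((Finset.univ.filter
        (fun x : X => ∑ t ∈ Finset.Icc 1 T, h t x < ν * T)).card : ℝ)
      ≤ (Fintype.card X : ℝ) *
          Real.exp (-γ * η * T + ν * η * T + ν * η ^ 2 * T) :=
  stmt3_general T η γ hη h hh p hp0 hrec hcov ν
end

section
/- Let (X, 𝒜, P) be a probability space, ℋ a collection of measurable functions X → {0,1}, and S_m = ((x₁,z₁),…,(x_m,z_m)) a finite labeled sample with x_i ∈ X and z_i ∈ {0,1}. Let VS = {g ∈ ℋ : g(x_i) = z_i for all i} be the version space, and suppose h* ∈ VS. Assume the abstention set D = {x ∈ X : ∃ g₁, g₂ ∈ VS with g₁(x) ≠ g₂(x)} and, for each r > 0, the set DIS(B(h*, r)) = {x ∈ X : ∃ h₁, h₂ ∈ B(h*, r) with h₁(x) ≠ h₂(x)} are measurable, where B(h*, r) = {h ∈ ℋ : P({x : h(x) ≠ h*(x)}) ≤ r}. Let θ = sup_{r > 0} P(DIS(B(h*, r)))/r be the disagreement coefficient of h*, and suppose θ < ∞. If ε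 > 0 and P({x : g(x) ≠ h*(x)}) < ε for every g ∈ VS, then P(D) ≤ θ·ε; that is, the consistent selective strategy abstains with probability at most θ·ε. -/
open MeasureTheory
open scoped ENNReal

/-- Theorem: CSS coverage via the disagreement coefficient.
Given a probability measure `P` on `X`, a hypothesis class `H` of
`Bool`-valued classifiers, a labeled sample `(xs, zs)` with version space
`VS`, and a zero-error classifier `hstar ∈ VS`, if every `g ∈ VS` satisfies
`P{x : g x ≠ hstar x} < ε`, then the abstention (disagreement) region `D` of
the consistent selective strategy satisfies `P D ≤ θ ε`, where `θ` is the
disagreement coefficient of `hstar`. -/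
theorem stmt4 {X : Type*} [MeasurableSpace X]
    (P : Measure X) [IsProbabilityMeasure P]
    (H : Set (X → Bool))
    (m : ℕ) (xs : Fin m → X) (zs : Fin m → Bool)
    (VS : Set (X → Bool))
    (hVS : VS = {g ∈ H | ∀ i, g (xs i) = zs i})
    (hstar : X → Bool) (hstarVS : hstar ∈ VS)
    (Ball : ℝ → Set (X → Bool))
    (hBall : ∀ r, Ball r =
      {h ∈ H | P {x | h x ≠ hstar x} ≤ ENNReal.ofReal r})
    (D : Set X)
    (hD : D = {x | ∃ g₁ ∈ VS, ∃ g₂ ∈ VS, g₁ x ≠ g₂ x})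
    (hDmeas : MeasurableSet D)
    (DIS : ℝ → Set X)
    (hDIS : ∀ r, DIS r = {x | ∃ h₁ ∈ Ball r, ∃ h₂ ∈ Ball r, h₁ x ≠ h₂ x})
    (hDISmeas : ∀ r > 0, MeasurableSet (DIS r))
    (θ : ℝ≥0∞)
    (hθ : θ = ⨆ (r : ℝ) (_ : 0 < r), P (DIS r) / ENNReal.ofReal r)
    (hθfin : θ ≠ ⊤)
    (ε : ℝ) (hε : 0 < ε)
    (herr : ∀ g ∈ VS, P {x | g x ≠ hstar x} < ENNReal.ofReal ε) :
    P D ≤ θ * ENNReal.ofReal ε := by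
  have hsub : D ⊆ DIS ε := by
    rw [hD, hDIS]
    rintro x ⟨g₁, hg₁, g₂, hg₂, hne⟩
    have hB : ∀ g ∈ VS, g ∈ Ball ε := by
      intro g hg
      rw [hBall]
      refine ⟨(hVS ▸ hg).1, (herr g hg).le⟩
    exact ⟨g₁, hB g₁ hg₁, g₂, hB g₂ hg₂, hne⟩
  have h1 : P D ≤ P (DIS ε) := measure_mono hsub
  have hεne : ENNReal.ofReal ε ≠ 0 := by
    simp [ENNReal.ofReal_eq_zero, not_le, hε]
  have h2 : P (DIS ε) = (P (DIS ε) / ENNReal.ofReal ε) * ENNReal.ofReal ε :=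
    (ENNReal.div_mul_cancel hεne ENNReal.ofReal_ne_top).symm
  have h3 : P (DIS ε) / ENNReal.ofReal ε ≤ θ := by
    rw [hθ]
    exact le_iSup₂ (f := fun r (_ : 0 < r) => P (DIS r) / ENNReal.ofReal r) ε hε
  calc P D ≤ P (DIS ε) := h1
    _ = (P (DIS ε) / ENNReal.ofReal ε) * ENNReal.ofReal ε := h2
    _ ≤ θ * ENNReal.ofReal ε := mul_le_mul_left h3 _
end

section
/- Let 𝒳 ⊂ ℝ^d be a measurable set with Lebesgue measure vol(𝒳) satisfying 0 < vol(𝒳) < ∞, let T be a positive integer, η ∈ [0,1/2], and γ > 0. Let h⁽¹⁾,…,h⁽ᵀ⁾ : 𝒳 → [0,1] be measurable, let p⁽⁰⁾(x) = 1/vol(𝒳) for all x ∈ 𝒳, and for each t define p⁽ᵗ⁾(x) = p⁽ᵗ⁻¹⁾(x)(1 − η h⁽ᵗ⁾(x)) / ∫_𝒳 p⁽ᵗ⁻¹⁾(y)(1 − η h⁽ᵗ⁾(y)) dy. Assume ∫_𝒳 h⁽ᵗ⁾(x) p⁽ᵗ⁻¹⁾(x) dx ≥ γ for every t ∈ {1,…,T},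 and set M_T(x) = Σ_{t=1}^T h⁽ᵗ⁾(x). Then for every x ∈ 𝒳: log p⁽ᵀ⁾(x) ≥ (γη/(η+2))·( T − ((η+1)(η+2)/γ)·M_T(x) ) − log(2·vol(𝒳)). -/
/-!
Each round multiplies the density at `x` by `1 - η h(x) ≥ exp (-η(η+1) h(x))` and divides it by
the normaliser `Z = 1 - η ∫ h p ≤ exp (-η γ)`. Telescoping gives
`log p_T(x) ≥ log p_0(x) + T η γ - η(η+1) M_T(x)`; the claim follows since
`γη/(η+2) ≤ ηγ` and `p_0 = 1/vol(𝒳)`.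
-/

open MeasureTheory Set Real

lemma Real.neg_add_sq_le_log_one_sub {z : ℝ} (hz0 : 0 ≤ z) (hz : z ≤ 1 / 2) :
    -(z + z ^ 2) ≤ log (1 - z) := by
  have hpos : 0 < 1 - z := by linarith
  rw [le_log_iff_exp_le hpos, exp_neg, inv_le_comm₀ (exp_pos _) hpos]
  have hquad : 1 + (z + z ^ 2) + (z + z ^ 2) ^ 2 / 2 ≤ exp (z + z ^ 2) :=
    quadratic_le_exp_of_nonneg (by positivity)
  have hpoly : 0 ≤ z ^ 2 * (1 - z - z ^ 2 - z ^ 3) := by nlinarith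
  rw [inv_le_iff_one_le_mul₀' hpos]
  nlinarith [mul_le_mul_of_nonneg_left hquad hpos.le]

section SetIntegral

variable {α : Type*} [MeasurableSpace α] {μ : Measure α} {s : Set α} {p g : α → ℝ}

lemma MeasureTheory.IntegrableOn.mul_of_mem_Icc (hs : MeasurableSet s) (hp : IntegrableOn p s μ)
    (hg : Measurable g) (hg01 : ∀ x ∈ s, g x ∈ Icc 0 1) :
    IntegrableOn (fun x ↦ g x * p x) s μ :=
  Integrable.bdd_mul (c := 1) hp hg.aestronglyMeasurable <| (ae_restrict_mem hs).mono fun x hx ↦ by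
    rw [norm_eq_abs, abs_le]
    constructor <;> linarith [(hg01 x hx).1, (hg01 x hx).2]

lemma setIntegral_mul_one_sub_eq (hs : MeasurableSet s) (hp : IntegrableOn p s μ)
    (hp1 : ∫ x in s, p x ∂μ = 1) (hg : Measurable g) (hg01 : ∀ x ∈ s, g x ∈ Icc 0 1) (η : ℝ) :
    ∫ x in s, p x * (1 - η * g x) ∂μ = 1 - η * ∫ x in s, g x * p x ∂μ := by
  have hsplit : ∀ x, p x * (1 - η * g x) = p x - η * (g x * p x) := fun x ↦ by ring
  simp_rw [hsplit]
  rw [integral_sub hp ((hp.mul_of_mem_Icc hs hg hg01).const_mul η), integral_const_mul, hp1]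

lemma setIntegral_mul_le_one (hs : MeasurableSet s) (hp : IntegrableOn p s μ)
    (hpos : ∀ x ∈ s, 0 ≤ p x) (hp1 : ∫ x in s, p x ∂μ = 1) (hg : Measurable g)
    (hg01 : ∀ x ∈ s, g x ∈ Icc 0 1) :
    ∫ x in s, g x * p x ∂μ ≤ 1 := by
  rw [← hp1]
  refine setIntegral_mono_on (hp.mul_of_mem_Icc hs hg hg01) hp hs fun x hx ↦ ?_
  nlinarith [hpos x hx, (hg01 x hx).2]

end SetIntegral

section MultiplicativeWeights

variable {α : Type*} [MeasurableSpace α] {μ : Measure α} {s : Set α} {η : ℝ}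

theorem multiplicativeWeights_step {p q g : α → ℝ} (hs : MeasurableSet s)
    (hp : IntegrableOn p s μ) (hpos : ∀ x ∈ s, 0 < p x) (hp1 : ∫ x in s, p x ∂μ = 1)
    (hg : Measurable g) (hg01 : ∀ x ∈ s, g x ∈ Icc 0 1) (hη : η ∈ Icc 0 (1 / 2))
    (hq : ∀ x ∈ s, q x = p x * (1 - η * g x) / ∫ y in s, p y * (1 - η * g y) ∂μ) :
    (∀ x ∈ s, 0 < q x) ∧ ∫ x in s, q x ∂μ = 1 ∧
      ∀ x ∈ s, log (p x) + η * ∫ y in s, g y * p y ∂μ - η * (η + 1) * g x ≤ log (q x) := by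
  obtain ⟨hη0, hη2⟩ := hη
  set Z := ∫ y in s, p y * (1 - η * g y) ∂μ with hZdef
  have hZ : Z = 1 - η * ∫ y in s, g y * p y ∂μ := setIntegral_mul_one_sub_eq hs hp hp1 hg hg01 η
  have hI := setIntegral_mul_le_one hs hp (fun x hx ↦ (hpos x hx).le) hp1 hg hg01
  have hZpos : 0 < Z := by nlinarith
  have hfactor : ∀ x ∈ s, 0 < 1 - η * g x := fun x hx ↦ by nlinarith [(hg01 x hx).2]
  refine ⟨fun x hx ↦ hq x hx ▸ div_pos (mul_pos (hpos x hx) (hfactor x hx)) hZpos, ?_, ?_⟩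
  · rw [setIntegral_congr_fun hs hq, integral_div, div_self hZpos.ne']
  · intro x hx
    obtain ⟨hg0, hg1⟩ := hg01 x hx
    have hlogZ : log Z ≤ -(η * ∫ y in s, g y * p y ∂μ) := by
      linarith [log_le_sub_one_of_pos hZpos]
    have hlogfactor : -(η * (η + 1) * g x) ≤ log (1 - η * g x) := by
      have := neg_add_sq_le_log_one_sub (mul_nonneg hη0 hg0) (by nlinarith)
      nlinarith [mul_nonneg (mul_nonneg hη0 hη0) (mul_nonneg hg0 (sub_nonneg.2 hg1))]
    rw [hq x hx, log_div (mul_pos (hpos x hx) (hfactor x hx)).ne' hZpos.ne',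
      log_mul (hpos x hx).ne' (hfactor x hx).ne']
    linarith

theorem multiplicativeWeights_log_ge (hs : MeasurableSet s) (hη : η ∈ Icc 0 (1 / 2))
    {T : ℕ} {γ : ℝ} {h p : ℕ → α → ℝ} (hhmeas : ∀ t, Measurable (h t))
    (hh : ∀ t, ∀ x ∈ s, h t x ∈ Icc 0 1) (hpint : ∀ t, IntegrableOn (p t) s μ)
    (hpos : ∀ x ∈ s, 0 < p 0 x) (hp1 : ∫ x in s, p 0 x ∂μ = 1)
    (hrec : ∀ t < T, ∀ x ∈ s,
      p (t + 1) x = p t x * (1 - η * h (t + 1) x) / ∫ y in s, p t y * (1 - η * h (t + 1) y) ∂μ)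
    (hcov : ∀ t < T, γ ≤ ∫ x in s, h (t + 1) x * p t x ∂μ) :
    ∀ x ∈ s, log (p 0 x) + T * (η * γ) - η * (η + 1) * ∑ t ∈ Finset.Icc 1 T, h t x
      ≤ log (p T x) := by
  suffices ∀ t ≤ T, (∀ x ∈ s, 0 < p t x) ∧ ∫ x in s, p t x ∂μ = 1 ∧
      ∀ x ∈ s, log (p 0 x) + t * (η * γ) - η * (η + 1) * ∑ u ∈ Finset.Icc 1 t, h u x
        ≤ log (p t x) from (this T le_rfl).2.2
  intro t
  induction t with
  | zero => simpa using ⟨hpos, hp1⟩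
  | succ t ih =>
    intro ht
    obtain ⟨hpos_t, hp1_t, hlog_t⟩ := ih (Nat.le_of_succ_le ht)
    obtain ⟨hpos', hp1', hlog'⟩ := multiplicativeWeights_step hs (hpint t) hpos_t hp1_t
      (hhmeas (t + 1)) (hh (t + 1)) hη (hrec t ht)
    refine ⟨hpos', hp1', fun x hx ↦ ?_⟩
    rw [Finset.sum_Icc_succ_top (Nat.le_add_left 1 t)]
    push_cast
    nlinarith [hlog_t x hx, hlog' x hx, hcov t ht, hη.1]

end MultiplicativeWeights

theorem stmt5_general {d : ℕ}
    (X : Set (EuclideanSpace ℝ (Fin d))) (hXmeas : MeasurableSet X)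
    (hXpos : 0 < volume X) (hXfin : volume X ≠ ⊤)
    (T : ℕ)
    (η γ : ℝ) (hη : η ∈ Set.Icc (0 : ℝ) (1 / 2)) (hγ : 0 < γ)
    (h : ℕ → EuclideanSpace ℝ (Fin d) → ℝ)
    (hhmeas : ∀ t, Measurable (h t))
    (hh : ∀ t x, x ∈ X → h t x ∈ Set.Icc (0 : ℝ) 1)
    (p : ℕ → EuclideanSpace ℝ (Fin d) → ℝ)
    (hpint : ∀ t, IntegrableOn (p t) X volume)
    (hp0 : ∀ x ∈ X, p 0 x = 1 / (volume X).toReal)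
    (hrec : ∀ t < T, ∀ x ∈ X, p (t + 1) x =
      p t x * (1 - η * h (t + 1) x) /
        ∫ y in X, p t y * (1 - η * h (t + 1) y))
    (hcov : ∀ t < T, γ ≤ ∫ x in X, h (t + 1) x * p t x) :
    ∀ x ∈ X, Real.log (p T x)
      ≥ γ * η / (η + 2) *
          ((T : ℝ) - (η + 1) * (η + 2) / γ * (∑ t ∈ Finset.Icc 1 T, h t x))
        - Real.log (2 * (volume X).toReal) := by
  set V := (volume X).toReal
  have hV : 0 < V := ENNReal.toReal_pos hXpos.ne' hXfin
  have hpos : ∀ x ∈ X, 0 < p 0 x := fun x hx ↦ by rw [hp0 x hx]; positivity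
  have hp1 : ∫ x in X, p 0 x = 1 := by
    rw [setIntegral_congr_fun hXmeas hp0, setIntegral_const, smul_eq_mul, measureReal_def,
      one_div, mul_inv_cancel₀ hV.ne']
  intro x hx
  have hlog := multiplicativeWeights_log_ge hXmeas hη hhmeas hh hpint hpos hp1 hrec hcov x hx
  have hlog0 : -log (2 * V) ≤ log (p 0 x) := by
    rw [hp0 x hx, one_div, log_inv, neg_le_neg_iff]
    exact log_le_log hV (by linarith)
  have hrate : γ * η / (η + 2) ≤ η * γ := by
    rw [mul_comm γ η]
    exact div_le_self (mul_nonneg hη.1 hγ.le) (by linarith [hη.1])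
  have hexpand : γ * η / (η + 2) * ((T : ℝ) - (η + 1) * (η + 2) / γ * ∑ t ∈ Finset.Icc 1 T, h t x)
      = T * (γ * η / (η + 2)) - η * (η + 1) * ∑ t ∈ Finset.Icc 1 T, h t x := by
    have : η + 2 ≠ 0 := by linarith [hη.1]
    field_simp
  rw [ge_iff_le, hexpand]
  nlinarith [(T.cast_nonneg : (0 : ℝ) ≤ T)]

/-- continuous cutting-plane bound, Lemma 1 of the supplement:
for the continuous multiplicative-weights process
`p (t+1) x ∝ p t x * (1 − η h (t+1) x)` started from the uniform density on a
measurable `𝒳 ⊂ ℝ^d` with `0 < vol(𝒳) < ∞`, if each round has coverage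
`∫_𝒳 h (t+1) x · p t x dx ≥ γ`, then for every `x ∈ 𝒳`,
`log p T x ≥ (γη/(η+2))(T − ((η+1)(η+2)/γ) M_T(x)) − log(2 vol(𝒳))`. -/
theorem stmt5 {d : ℕ}
    (X : Set (EuclideanSpace ℝ (Fin d))) (hXmeas : MeasurableSet X)
    (hXpos : 0 < volume X) (hXfin : volume X ≠ ⊤)
    (T : ℕ) (hT : 0 < T)
    (η γ : ℝ) (hη : η ∈ Set.Icc (0 : ℝ) (1 / 2)) (hγ : 0 < γ)
    (h : ℕ → EuclideanSpace ℝ (Fin d) → ℝ)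
    (hhmeas : ∀ t, Measurable (h t))
    (hh : ∀ t x, x ∈ X → h t x ∈ Set.Icc (0 : ℝ) 1)
    (p : ℕ → EuclideanSpace ℝ (Fin d) → ℝ)
    (hpint : ∀ t, IntegrableOn (p t) X volume)
    (hp0 : ∀ x ∈ X, p 0 x = 1 / (volume X).toReal)
    (hrec : ∀ t < T, ∀ x ∈ X, p (t + 1) x =
      p t x * (1 - η * h (t + 1) x) /
        ∫ y in X, p t y * (1 - η * h (t + 1) y))
    (hcov : ∀ t < T, γ ≤ ∫ x in X, h (t + 1) x * p t x) :
    ∀ x ∈ X, Real.log (p T x)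
      ≥ γ * η / (η + 2) *
          ((T : ℝ) - (η + 1) * (η + 2) / γ * (∑ t ∈ Finset.Icc 1 T, h t x))
        - Real.log (2 * (volume X).toReal) :=
  stmt5_general X hXmeas hXpos hXfin T η γ hη hγ h hhmeas hh p hpint hp0 hrec hcov
end

section
/- Let 𝒳 ⊂ ℝ^d be measurable with 0 < vol(𝒳) < ∞, and let h* : 𝒳 → {0,1} with S* = {x ∈ 𝒳 : h*(x) = 0} of positive finite Lebesgue measure; let q(x) = 1{h*(x)=0} / vol(S*) be the uniform density on S*. Let p be a probability density on 𝒳 that is constant on S*, let h : 𝒳 → {0,1} be measurable with h(x) = 0 for every x with h*(x) = 0, let γ = ∫_𝒳 h(x) p(x) dx, and suppose ∫_𝒳 1{h*(x)=1}·1{h(x)=0}·p(x) dx ≤ ν, with γ + ν < 1 and η ∈ [0,1]. Define p'(x) = p(x)(1 − η h(x)) / ∫_𝒳 p(y)(1 − η h(y)) dy. Then for every x ∈ 𝒳: ((1 − η(γ − ν)) / (1 − γ − ν)) · p'(x) ≥ q(x). -/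
/-! Since `h` vanishes on `S*`, the update only rescales `p` there, by the normaliser
`∫ p (1 - η h) = 1 - η γ`. Every point of `𝒳` lies in `S*`, in `{h = 1}` or in
`{h* = 1, h = 0}`, so the constant value `c` of `p` on `S*` satisfies
`c · vol S* ≥ 1 - γ - ν > 0`. With `1 - η γ ≤ 1 - η (γ - ν)` this gives `p' ≥ q` on `S*`;
off `S*` simply `p' ≥ 0 = q`. -/

open MeasureTheory

section Integrals

variable {α : Type*} [MeasurableSpace α] {μ : Measure α} {s : Set α}

theorem MeasureTheory.IntegrableOn.zero_or_one_mul {g p : α → ℝ} (hp : IntegrableOn p s μ)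
    (hg : Measurable g) (hg01 : ∀ x, g x = 0 ∨ g x = 1) : IntegrableOn (fun x => g x * p x) s μ :=
  Integrable.bdd_mul (c := 1) hp hg.aestronglyMeasurable
    (ae_of_all _ fun x => by rcases hg01 x with hx | hx <;> simp [hx])

theorem measurable_ite_eq {g : α → ℝ} (hg : Measurable g) (c : ℝ) :
    Measurable fun x => if g x = c then (1 : ℝ) else 0 :=
  Measurable.ite (hg (measurableSet_singleton c)) measurable_const measurable_const

theorem setIntegral_ite_eq_mul {g p : α → ℝ} (hg : Measurable g) (c : ℝ) :
    ∫ x in s, (if g x = c then (1 : ℝ) else 0) * p x ∂μ = ∫ x in s ∩ g ⁻¹' {c}, p x ∂μ := by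
  rw [← setIntegral_indicator (hg (measurableSet_singleton c))]
  congr with x
  by_cases hx : g x = c <;> simp [Set.indicator, hx]

theorem setIntegral_mul_one_sub_mul {p h : α → ℝ} (η : ℝ) (hp : IntegrableOn p s μ)
    (hhp : IntegrableOn (fun x => h x * p x) s μ) :
    ∫ x in s, p x * (1 - η * h x) ∂μ = ∫ x in s, p x ∂μ - η * ∫ x in s, h x * p x ∂μ := by
  rw [← integral_const_mul, ← integral_sub hp (hhp.const_mul η)]
  congr with x
  ring

theorem setIntegral_le_add_add_of_one_le {p f g k : α → ℝ} (hs : MeasurableSet s)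
    (hp : IntegrableOn p s μ) (hp0 : ∀ x ∈ s, 0 ≤ p x)
    (hf : IntegrableOn (fun x => f x * p x) s μ) (hg : IntegrableOn (fun x => g x * p x) s μ)
    (hk : IntegrableOn (fun x => k x * p x) s μ) (hcover : ∀ x ∈ s, 1 ≤ f x + g x + k x) :
    ∫ x in s, p x ∂μ ≤
      ∫ x in s, f x * p x ∂μ + ∫ x in s, g x * p x ∂μ + ∫ x in s, k x * p x ∂μ := by
  calc ∫ x in s, p x ∂μ ≤ ∫ x in s, (f x * p x + g x * p x + k x * p x) ∂μ :=
        setIntegral_mono_on hp ((hf.add hg).add hk) hs fun x hx => by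
          nlinarith [hcover x hx, hp0 x hx]
    _ = _ := by
      rw [integral_add (f := fun x => f x * p x + g x * p x) (hf.add hg) hk, integral_add hf hg]

theorem one_sub_sub_le_setIntegral_inter_preimage_zero {g h p : α → ℝ} (hs : MeasurableSet s)
    (hg : Measurable g) (hh : Measurable h) (hg01 : ∀ x, g x = 0 ∨ g x = 1)
    (hh01 : ∀ x, h x = 0 ∨ h x = 1) (hp : IntegrableOn p s μ) (hp0 : ∀ x ∈ s, 0 ≤ p x)
    (hp1 : ∫ x in s, p x ∂μ = 1) :
    1 - ∫ x in s, h x * p x ∂μ -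
        ∫ x in s, (if g x = 1 then (1 : ℝ) else 0) * (if h x = 0 then (1 : ℝ) else 0) * p x ∂μ ≤
      ∫ x in s ∩ g ⁻¹' {0}, p x ∂μ := by
  have hzero : IntegrableOn (fun x => (if g x = 0 then (1 : ℝ) else 0) * p x) s μ :=
    hp.zero_or_one_mul (measurable_ite_eq hg 0) fun x => by split_ifs <;> simp
  have hmiss : IntegrableOn (fun x => (if g x = 1 then (1 : ℝ) else 0) *
      (if h x = 0 then (1 : ℝ) else 0) * p x) s μ :=
    hp.zero_or_one_mul ((measurable_ite_eq hg 1).mul (measurable_ite_eq hh 0))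
      fun x => by split_ifs <;> simp
  have hcover := setIntegral_le_add_add_of_one_le hs hp hp0 hzero (hp.zero_or_one_mul hh hh01)
    hmiss fun x _ => by
      rcases hg01 x with hx | hx <;> rcases hh01 x with hx' | hx' <;> simp [hx, hx']
  rw [hp1, setIntegral_ite_eq_mul hg] at hcover
  linarith

theorem setIntegral_eq_measureReal_mul_of_eqOn {p : α → ℝ} (hs : MeasurableSet s) {x₀ : α}
    (hx₀ : x₀ ∈ s) (hconst : ∀ x ∈ s, ∀ y ∈ s, p x = p y) :
    ∫ x in s, p x ∂μ = μ.real s * p x₀ := by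
  rw [setIntegral_congr_fun hs fun x hx => hconst x hx x₀ hx₀, setIntegral_const, smul_eq_mul]

end Integrals

section Factor

variable {η γ ν : ℝ}

theorem one_sub_mul_pos (hη1 : η ≤ 1) (hγ : 0 ≤ γ) (hν : 0 ≤ ν) (hγν : γ + ν < 1) :
    0 < 1 - η * γ := by
  nlinarith

theorem div_one_sub_sub_nonneg (hη0 : 0 ≤ η) (hη1 : η ≤ 1) (hν : 0 ≤ ν)
    (hγν : γ + ν < 1) : 0 ≤ (1 - η * (γ - ν)) / (1 - γ - ν) :=
  div_nonneg (by nlinarith) (by linarith)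

theorem one_div_le_div_one_sub_sub_mul {m V : ℝ} (hη0 : 0 ≤ η) (hη1 : η ≤ 1) (hγ : 0 ≤ γ)
    (hν : 0 ≤ ν) (hγν : γ + ν < 1) (hV : 0 ≤ V) (hmass : 1 - γ - ν ≤ m * V) :
    1 / V ≤ (1 - η * (γ - ν)) / (1 - γ - ν) * (m / (1 - η * γ)) := by
  have hB : 0 < 1 - γ - ν := by linarith
  have hZ := one_sub_mul_pos hη1 hγ hν hγν
  have hVpos : 0 < V := hV.lt_of_ne (by rintro rfl; linarith [mul_zero m])
  have hm : 0 ≤ m := by nlinarith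
  calc 1 / V ≤ m / (1 - γ - ν) := by rw [div_le_div_iff₀ hVpos hB]; linarith
    _ ≤ (1 - η * (γ - ν)) / (1 - η * γ) * (m / (1 - γ - ν)) :=
      le_mul_of_one_le_left (by positivity) ((one_le_div hZ).2 (by nlinarith))
    _ = (1 - η * (γ - ν)) / (1 - γ - ν) * (m / (1 - η * γ)) := by ring

end Factor

theorem stmt6_general {d : ℕ}
    (X : Set (EuclideanSpace ℝ (Fin d))) (hXmeas : MeasurableSet X)
    (hstar h : EuclideanSpace ℝ (Fin d) → ℝ)
    (hstar01 : ∀ x, hstar x = 0 ∨ hstar x = 1)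
    (h01 : ∀ x, h x = 0 ∨ h x = 1)
    (hmeas : Measurable h) (hstarmeas : Measurable hstar)
    (Sstar : Set (EuclideanSpace ℝ (Fin d)))
    (hSstar : Sstar = {x ∈ X | hstar x = 0})
    (q : EuclideanSpace ℝ (Fin d) → ℝ)
    (hq : ∀ x, q x = (if hstar x = 0 then (1 : ℝ) else 0) / (volume Sstar).toReal)
    (p : EuclideanSpace ℝ (Fin d) → ℝ)
    (hpint : IntegrableOn p X volume)
    (hpnonneg : ∀ x ∈ X, 0 ≤ p x)
    (hpdens : ∫ x in X, p x = 1)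
    (hpconst : ∀ x ∈ Sstar, ∀ y ∈ Sstar, p x = p y)
    (hhsub : ∀ x, hstar x = 0 → h x = 0)
    (γ ν η : ℝ)
    (hγ : γ = ∫ x in X, h x * p x)
    (hν : (∫ x in X, (if hstar x = 1 then (1 : ℝ) else 0) *
        (if h x = 0 then (1 : ℝ) else 0) * p x) ≤ ν)
    (hγν : γ + ν < 1)
    (hη : η ∈ Set.Icc (0 : ℝ) 1)
    (p' : EuclideanSpace ℝ (Fin d) → ℝ)
    (hp' : ∀ x, p' x = p x * (1 - η * h x) / ∫ y in X, p y * (1 - η * h y)) :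
    ∀ x ∈ X, (1 - η * (γ - ν)) / (1 - γ - ν) * p' x ≥ q x := by
  obtain ⟨hη0, hη1⟩ := hη
  have hS : X ∩ hstar ⁻¹' {0} = Sstar := hSstar ▸ rfl
  have hh0 : ∀ x, 0 ≤ h x := fun x => by rcases h01 x with hx | hx <;> simp [hx]
  have hhp := hpint.zero_or_one_mul hmeas h01
  have hγ0 : 0 ≤ γ := hγ ▸ setIntegral_nonneg hXmeas fun x hx => mul_nonneg (hh0 x) (hpnonneg x hx)
  have hν0 : 0 ≤ ν := hν.trans' <| setIntegral_nonneg hXmeas fun x hx => by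
    have := hpnonneg x hx
    split_ifs <;> simp [this]
  have hZ : ∫ y in X, p y * (1 - η * h y) = 1 - η * γ := by
    rw [setIntegral_mul_one_sub_mul η hpint hhp, hpdens, hγ]
  intro x hx
  rcases hstar01 x with hx0 | hx1
  · have hxS : x ∈ Sstar := hSstar ▸ ⟨hx, hx0⟩
    have hSmeas : MeasurableSet Sstar := hS ▸ hXmeas.inter (hstarmeas (measurableSet_singleton 0))
    have hmass := one_sub_sub_le_setIntegral_inter_preimage_zero hXmeas hstarmeas hmeas hstar01 h01
      hpint hpnonneg hpdens
    rw [hS, setIntegral_eq_measureReal_mul_of_eqOn hSmeas hxS hpconst, measureReal_def,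
      ← hγ] at hmass
    rw [hq x, if_pos hx0, hp' x, hZ, hhsub x hx0, mul_zero, sub_zero, mul_one, ge_iff_le]
    exact one_div_le_div_one_sub_sub_mul hη0 hη1 hγ0 hν0 hγν ENNReal.toReal_nonneg
      (by linarith [hmass.trans' (sub_le_sub_left hν _)])
  · rw [hq x, if_neg (by simp [hx1]), zero_div, hp' x, hZ, ge_iff_le]
    have hηh : 0 ≤ 1 - η * h x := by rcases h01 x with hx' | hx' <;> simp [hx', hη1]
    exact mul_nonneg (div_one_sub_sub_nonneg hη0 hη1 hν0 hγν)
      (div_nonneg (mul_nonneg (hpnonneg x hx) hηh) (one_sub_mul_pos hη1 hγ0 hν0 hγν).le)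

/-- Lemma 2 of the supplement: if `p` is a density on `𝒳` that
is constant on the sublevel set `S* = {x ∈ 𝒳 : h* x = 0}`, the classifier `h`
never downweights `S*`, has coverage `γ = ∫ h p`, and misses at most mass `ν`
of the superlevel set, then one multiplicative-weights update `p'` dominates
the uniform density `q` on `S*` up to the factor `(1 − η(γ−ν))/(1 − γ − ν)`. -/
theorem stmt6 {d : ℕ}
    (X : Set (EuclideanSpace ℝ (Fin d))) (hXmeas : MeasurableSet X)
    (hXpos : 0 < volume X) (hXfin : volume X ≠ ⊤)
    (hstar h : EuclideanSpace ℝ (Fin d) → ℝ)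
    (hstar01 : ∀ x, hstar x = 0 ∨ hstar x = 1)
    (h01 : ∀ x, h x = 0 ∨ h x = 1)
    (hmeas : Measurable h) (hstarmeas : Measurable hstar)
    (Sstar : Set (EuclideanSpace ℝ (Fin d)))
    (hSstar : Sstar = {x ∈ X | hstar x = 0})
    (hSpos : 0 < volume Sstar) (hSfin : volume Sstar ≠ ⊤)
    (q : EuclideanSpace ℝ (Fin d) → ℝ)
    (hq : ∀ x, q x = (if hstar x = 0 then (1 : ℝ) else 0) / (volume Sstar).toReal)
    (p : EuclideanSpace ℝ (Fin d) → ℝ)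
    (hpint : IntegrableOn p X volume)
    (hpnonneg : ∀ x ∈ X, 0 ≤ p x)
    (hpdens : ∫ x in X, p x = 1)
    (hpconst : ∀ x ∈ Sstar, ∀ y ∈ Sstar, p x = p y)
    (hhsub : ∀ x, hstar x = 0 → h x = 0)
    (γ ν η : ℝ)
    (hγ : γ = ∫ x in X, h x * p x)
    (hν : (∫ x in X, (if hstar x = 1 then (1 : ℝ) else 0) *
        (if h x = 0 then (1 : ℝ) else 0) * p x) ≤ ν)
    (hγν : γ + ν < 1)
    (hη : η ∈ Set.Icc (0 : ℝ) 1)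
    (p' : EuclideanSpace ℝ (Fin d) → ℝ)
    (hp' : ∀ x, p' x = p x * (1 - η * h x) / ∫ y in X, p y * (1 - η * h y)) :
    ∀ x ∈ X, (1 - η * (γ - ν)) / (1 - γ - ν) * p' x ≥ q x :=
  stmt6_general X hXmeas hstar h hstar01 h01 hmeas hstarmeas Sstar hSstar q hq p hpint hpnonneg
    hpdens hpconst hhsub γ ν η hγ hν hγν hη p' hp'
end

section
/- Let d and B be positive integers, θ̂ ∈ ℝ^d, Σ ∈ ℝ^{d×d} symmetric positive definite with matrix square root Σ^{1/2}, and θ̃_1,…,θ̃_B i.i.d. with θ̃_i = θ̂ + Σ^{1/2}Z_i for Z_i i.i.d. standard Gaussian vectors. For τ > 0 let Q_τ = {θ : (θ − θ̂)ᵀΣ⁻¹(θ − θ̂) ≤ 2τ}, and for a set Q ⊆ ℝ^d define the selective classifier h_Q(x) = 1 if xᵀθ > 0 for all θ ∈ Q, h_Q(x) = 0 if xᵀθ ≤ 0 for all θ ∈ Q, and h_Q(x) = abstain otherwise; define the sampled selective classifier h̃(x) analogously over the finite set {θ̃_1,…,θ̃_B}. Then for every x ∈ ℝ^d: P( h_{Q_τ}(x)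 = 0 and h̃(x) = 1 ) ≤ (1 − Φ(−√(2τ)))^B, where Φ is the standard Gaussian cumulative distribution function. -/
/-!
The centre θ̂ lies in `Q_τ`, so on the event in question `xᵀθ̂ ≤ 0`, and then `xᵀθ̃ᵢ > 0` forces
`xᵀΣ^{1/2}Zᵢ > 0`. Since `Zᵢ ↦ -Zᵢ` preserves the standard Gaussian law, each of these
independent events has probability at most `1/2`, and `(1/2)^B ≤ Φ(√(2τ))^B = (1 - Φ(-√(2τ)))^B`.
-/

open MeasureTheory ProbabilityTheory Matrix Set

namespace ProbabilityTheory

variable {Ω : Type*} [MeasurableSpace Ω] {P : Measure Ω}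

lemma iIndepFun.curry {ι κ β : Type*} [MeasurableSpace β] {X : ι × κ → Ω → β}
    (mX : ∀ p, Measurable (X p)) (h : iIndepFun X P) :
    iIndepFun (fun i ω j ↦ X (i, j) ω) P := by
  have := h.isProbabilityMeasure
  have _ p := Measure.isProbabilityMeasure_map (μ := P) (mX p).aemeasurable
  rw [iIndepFun_iff_map_fun_eq_infinitePi_map fun i ↦ by fun_prop]
  have hcurry : (fun ω i j ↦ X (i, j) ω) = MeasurableEquiv.curry ι κ β ∘ fun ω p ↦ X p ω := rfl
  rw [hcurry, ← Measure.map_map (by fun_prop) (by fun_prop), h.map_fun_eq_infinitePi_map mX,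
    Measure.infinitePi_map_curry fun i j ↦ P.map (X (i, j))]
  congr with i : 1
  exact ((h.precomp (Prod.mk_right_injective i)).map_fun_eq_infinitePi_map fun j ↦ mX _).symm

end ProbabilityTheory

lemma measure_setOf_pos_le_half {E : Type*} [MeasurableSpace E] (μ : Measure E)
    [IsProbabilityMeasure μ] {f : E → ℝ} {σ : E → E} (hf : Measurable f) (hσ : Measurable σ)
    (hμσ : μ.map σ = μ) (hfσ : ∀ x, f (σ x) = -f x) :
    μ {x | 0 < f x} ≤ 2⁻¹ := by
  have hpos : MeasurableSet {x | 0 < f x} := measurableSet_lt measurable_const hf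
  have hsymm : μ {x | f x < 0} = μ {x | 0 < f x} := by
    have hpre : σ ⁻¹' {x | 0 < f x} = {x | f x < 0} := by ext x; simp [hfσ]
    rw [← hpre, ← Measure.map_apply hσ hpos, hμσ]
  have hdisj : Disjoint {x | 0 < f x} {x | f x < 0} :=
    disjoint_left.mpr fun _ (h₁ : 0 < f _) (h₂ : f _ < 0) ↦ lt_asymm h₁ h₂
  have hsum : μ {x | 0 < f x} + μ {x | f x < 0} ≤ 1 := by
    rw [← measure_union hdisj (measurableSet_lt hf measurable_const)]
    exact prob_le_one
  rw [hsymm, ← two_mul] at hsum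
  rwa [ENNReal.le_inv_iff_mul_le, mul_comm]

lemma gaussianReal_zero_map_neg (v : NNReal) :
    (gaussianReal 0 v).map Neg.neg = gaussianReal 0 v := by
  simpa using gaussianReal_map_neg (μ := 0) (v := v)

lemma gaussianReal_Iic_neg_toReal_le_half (v : NNReal) {s : ℝ} (hs : 0 < s) :
    (gaussianReal 0 v (Iic (-s))).toReal ≤ 2⁻¹ := by
  have hsub : Iic (-s) ⊆ {x : ℝ | 0 < -x} := fun _ hx ↦
    neg_pos.mpr (hx.trans_lt (neg_neg_of_pos hs))
  have hle := (measure_mono hsub).trans <| measure_setOf_pos_le_half (gaussianReal 0 v)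
    measurable_neg measurable_neg (gaussianReal_zero_map_neg v) fun _ ↦ rfl
  simpa using ENNReal.toReal_mono (by norm_num) hle

lemma infinitePi_gaussianReal_map_neg (ι : Type*) (v : NNReal) :
    (Measure.infinitePi fun _ : ι ↦ gaussianReal 0 v).map Neg.neg =
      Measure.infinitePi fun _ : ι ↦ gaussianReal 0 v := by
  calc (Measure.infinitePi fun _ : ι ↦ gaussianReal 0 v).map (fun g i ↦ -g i)
      = Measure.infinitePi fun _ : ι ↦ (gaussianReal 0 v).map Neg.neg :=
        Measure.infinitePi_map_pi _ fun _ ↦ measurable_neg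
    _ = Measure.infinitePi fun _ : ι ↦ gaussianReal 0 v := by rw [gaussianReal_zero_map_neg]

lemma infinitePi_gaussianReal_dotProduct_pos_le_half {ι : Type*} [Fintype ι] (v : NNReal)
    (w : ι → ℝ) :
    Measure.infinitePi (fun _ : ι ↦ gaussianReal 0 v) {g | 0 < w ⬝ᵥ g} ≤ 2⁻¹ :=
  measure_setOf_pos_le_half _ (by fun_prop) measurable_neg
    (infinitePi_gaussianReal_map_neg ι v) fun g ↦ dotProduct_neg w g

lemma measure_forall_dotProduct_pos_le {Ω ι κ : Type*} [MeasurableSpace Ω] {P : Measure Ω}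
    [Fintype ι] [Fintype κ] (Z : ι × κ → Ω → ℝ) (hmeas : ∀ p, Measurable (Z p))
    (hindep : iIndepFun Z P) {v : NNReal}
    (hgauss : ∀ p, P.map (Z p) = gaussianReal 0 v) (w : κ → ℝ) :
    P {ω | ∀ i, 0 < w ⬝ᵥ fun j ↦ Z (i, j) ω} ≤ 2⁻¹ ^ Fintype.card ι := by
  set U : Set (κ → ℝ) := {g | 0 < w ⬝ᵥ g}
  have hU : MeasurableSet U := measurableSet_lt measurable_const (by fun_prop)
  have hlaw (i : ι) :
      P.map (fun ω j ↦ Z (i, j) ω) = Measure.infinitePi fun _ : κ ↦ gaussianReal 0 v := by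
    rw [(hindep.precomp (Prod.mk_right_injective i)).map_fun_eq_infinitePi_map
      fun j ↦ hmeas _]
    simp only [hgauss]
  have hevent : {ω | ∀ i, 0 < w ⬝ᵥ fun j ↦ Z (i, j) ω} = ⋂ i, (fun ω j ↦ Z (i, j) ω) ⁻¹' U := by
    ext ω; simp [U]
  rw [hevent, (hindep.curry hmeas).meas_iInter fun i ↦ ⟨U, hU, rfl⟩, ← Finset.card_univ,
    ← Finset.prod_const]
  refine Finset.prod_le_prod' fun i _ ↦ ?_
  rw [← Measure.map_apply (by fun_prop) hU, hlaw]
  exact infinitePi_gaussianReal_dotProduct_pos_le_half v w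

theorem stmt10_general {d B : ℕ}
    {Ω : Type*} [MeasurableSpace Ω] (P : Measure Ω)
    (θhat : Fin d → ℝ) (S Ssq : Matrix (Fin d) (Fin d) ℝ)
    (Z : Fin B × Fin d → Ω → ℝ)
    (hZmeas : ∀ i, Measurable (Z i))
    (hZindep : iIndepFun Z P)
    (hZgauss : ∀ i, Measure.map (Z i) P = gaussianReal 0 1)
    (θt : Fin B → Ω → Fin d → ℝ)
    (hθt : ∀ i ω, θt i ω = θhat + Ssq.mulVec (fun j => Z (i, j) ω))
    (τ : ℝ) (hτ : 0 < τ) (x : Fin d → ℝ) :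
    P {ω | (∀ θ : Fin d → ℝ,
            (θ - θhat) ⬝ᵥ S⁻¹.mulVec (θ - θhat) ≤ 2 * τ → x ⬝ᵥ θ ≤ 0)
          ∧ (∀ i : Fin B, 0 < x ⬝ᵥ θt i ω)}
      ≤ ENNReal.ofReal
          ((1 - (gaussianReal 0 1 (Set.Iic (-Real.sqrt (2 * τ)))).toReal) ^ B) := by
  have hhalf : (2⁻¹ : ℝ) ≤ 1 - (gaussianReal 0 1 (Iic (-Real.sqrt (2 * τ)))).toReal := by
    have := gaussianReal_Iic_neg_toReal_le_half 1 (Real.sqrt_pos.mpr (by linarith : 0 < 2 * τ))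
    linarith
  calc _ ≤ P {ω | ∀ i, 0 < (x ᵥ* Ssq) ⬝ᵥ fun j ↦ Z (i, j) ω} := by
        refine measure_mono fun ω ⟨hQ, hpos⟩ i ↦ ?_
        have hcenter : x ⬝ᵥ θhat ≤ 0 := hQ θhat (by simp [hτ.le])
        have hsample := hpos i
        rw [hθt, dotProduct_add, dotProduct_mulVec] at hsample
        linarith
    _ ≤ 2⁻¹ ^ B := by
      simpa using measure_forall_dotProduct_pos_le Z hZmeas hZindep hZgauss (x ᵥ* Ssq)
    _ = ENNReal.ofReal (2⁻¹ ^ B) := by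
      rw [ENNReal.ofReal_pow (by norm_num), ENNReal.ofReal_inv_of_pos two_pos,
        ENNReal.ofReal_ofNat]
    _ ≤ _ := ENNReal.ofReal_le_ofReal (pow_le_pow_left₀ (by norm_num) hhalf B)

/-- first half of Theorem 5 of the supplement: for the
ellipsoid `Q_τ = {θ : (θ−θ̂)ᵀΣ⁻¹(θ−θ̂) ≤ 2τ}` and `B` i.i.d. Gaussian
samples `θ̃ i = θ̂ + Σ^{1/2} Z i`, the probability that the ellipsoid
selective classifier outputs `0` at `x` (every `θ ∈ Q_τ` has `xᵀθ ≤ 0`)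
while the sampled selective classifier outputs `1` (every `i` has
`xᵀθ̃ i > 0`) is at most `(1 − Φ(−√(2τ)))^B`. -/
theorem stmt10 {d B : ℕ} (hd : 0 < d) (hB : 0 < B)
    {Ω : Type*} [MeasurableSpace Ω] (P : Measure Ω) [IsProbabilityMeasure P]
    (θhat : Fin d → ℝ) (S Ssq : Matrix (Fin d) (Fin d) ℝ)
    (hSsym : S.IsSymm) (hSpd : S.PosDef) (hsq : Ssq * Ssq = S)
    (Z : Fin B × Fin d → Ω → ℝ)
    (hZmeas : ∀ i, Measurable (Z i))
    (hZindep : iIndepFun Z P)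
    (hZgauss : ∀ i, Measure.map (Z i) P = gaussianReal 0 1)
    (θt : Fin B → Ω → Fin d → ℝ)
    (hθt : ∀ i ω, θt i ω = θhat + Ssq.mulVec (fun j => Z (i, j) ω))
    (τ : ℝ) (hτ : 0 < τ) (x : Fin d → ℝ) :
    P {ω | (∀ θ : Fin d → ℝ,
            (θ - θhat) ⬝ᵥ S⁻¹.mulVec (θ - θhat) ≤ 2 * τ → x ⬝ᵥ θ ≤ 0)
          ∧ (∀ i : Fin B, 0 < x ⬝ᵥ θt i ω)}
      ≤ ENNReal.ofReal
          ((1 - (gaussianReal 0 1 (Set.Iic (-Real.sqrt (2 * τ)))).toReal) ^ B) :=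
  stmt10_general P θhat S Ssq Z hZmeas hZindep hZgauss θt hθt τ hτ x
end

section
/- Let L : ℝ^d → ℝ be twice continuously differentiable and γ-strongly convex (γ > 0), with Hessian M-Lipschitz in operator norm (‖∇²L(θ) − ∇²L(θ')‖_op ≤ M‖θ − θ'‖ for all θ, θ'), and let θ̂ be the global minimizer of L. For τ ≥ 0 define the quadratic version space Q_τ = {θ : ∇L(θ̂)ᵀ(θ − θ̂) + ½(θ − θ̂)ᵀ∇²L(θ̂)(θ − θ̂) ≤ τ} and the sublevel set ℒ_τ = {θ : L(θ) − L(θ̂) ≤ τ}, and set ζ = M(2τ/γ)^{3/2}. Then ℒ_τ ⊆ Q_{τ+ζ} and Q_τ ⊆ ℒ_{τ+ζ}. -/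
/-!
Since `θhat` minimizes `L`, `∇L(θhat) = 0` and the quadratic model at `θhat` is
`½⟪H h, h⟫` with `h = θ - θhat`. A Hessian that is `M`-Lipschitz makes this model exact up to
`M ‖h‖³`. Both sets lie in the ball `‖h‖² ≤ 2τ/γ`: for `ℒ_τ` by strong convexity at `θhat`,
for `Q_τ` because strong convexity forces `H ≥ γ`. On that ball the error `M ‖h‖³` is at most
`ζ = M (2τ/γ)^{3/2}`.
-/

open scoped RealInnerProductSpace

open Filter Set Topology

section Calculus

variable {E F : Type*} [NormedAddCommGroup E] [NormedSpace ℝ E]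
  [NormedAddCommGroup F] [NormedSpace ℝ F]

theorem norm_sub_sub_fderiv_le_of_lipschitz_fderiv {g : E → F} {M : ℝ} (hM : 0 ≤ M)
    (hg : Differentiable ℝ g) (hlip : ∀ x y, ‖fderiv ℝ g x - fderiv ℝ g y‖ ≤ M * ‖x - y‖)
    (x y : E) : ‖g y - g x - fderiv ℝ g x (y - x)‖ ≤ M * ‖y - x‖ ^ 2 := by
  have hbound : ∀ z ∈ segment ℝ x y, ‖fderiv ℝ g z - fderiv ℝ g x‖ ≤ M * ‖y - x‖ :=
    fun z hz => (hlip z x).trans (by gcongr; exact norm_sub_le_of_mem_segment hz)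
  calc ‖g y - g x - fderiv ℝ g x (y - x)‖ ≤ M * ‖y - x‖ * ‖y - x‖ :=
        (convex_segment x y).norm_image_sub_le_of_norm_fderiv_le' (fun z _ => hg z) hbound
          (left_mem_segment ℝ x y) (right_mem_segment ℝ x y)
    _ = M * ‖y - x‖ ^ 2 := by ring

end Calculus

section Gradient

variable {E : Type*} [NormedAddCommGroup E] [InnerProductSpace ℝ E] [CompleteSpace E]
  {f : E → ℝ}

theorem ContDiff.differentiable_gradient (hf : ContDiff ℝ 2 f) : Differentiable ℝ (gradient f) :=
  (InnerProductSpace.toDual ℝ E).symm.toContinuousLinearEquiv.differentiable.comp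
    ((hf.fderiv_right (by norm_num)).differentiable one_ne_zero)

theorem IsLocalMin.gradient_eq_zero {x : E} (h : IsLocalMin f x) : gradient f x = 0 := by
  rw [gradient, h.fderiv_eq_zero, map_zero]

theorem abs_sub_sub_inner_gradient_sub_inner_fderiv_gradient_le {M : ℝ} (hM : 0 ≤ M)
    (hf : Differentiable ℝ f) (hf' : Differentiable ℝ (gradient f))
    (hlip : ∀ x y, ‖fderiv ℝ (gradient f) x - fderiv ℝ (gradient f) y‖ ≤ M * ‖x - y‖)
    (x y : E) :
    |f y - f x - ⟪gradient f x, y - x⟫ - 1 / 2 * ⟪fderiv ℝ (gradient f) x (y - x), y - x⟫|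
      ≤ M * ‖y - x‖ ^ 3 := by
  set h := y - x
  set H := fderiv ℝ (gradient f) x
  -- `φ` is `f` along the segment minus its quadratic model; its derivative is the first-order
  -- remainder of `gradient f`, of size `M ‖t • h‖² ‖h‖`.
  set φ : ℝ → ℝ := fun t => f (x + t • h) - t * ⟪gradient f x, h⟫ - t ^ 2 / 2 * ⟪H h, h⟫
  set φ' : ℝ → ℝ := fun t => ⟪gradient f (x + t • h) - gradient f x - H (t • h), h⟫
  have hφ' : ∀ t : ℝ, HasDerivAt φ (φ' t) t := by
    intro t
    have hline : HasDerivAt (fun t : ℝ => x + t • h) h t := by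
      simpa using ((hasDerivAt_id t).smul_const h).const_add x
    have := (((hf _).hasFDerivAt.comp_hasDerivAt t hline).sub
      ((hasDerivAt_id t).mul_const ⟪gradient f x, h⟫)).sub
      (((hasDerivAt_pow 2 t).div_const 2).mul_const ⟪H h, h⟫)
    refine this.congr_deriv ?_
    simp only [φ', inner_sub_left, inner_gradient_left, map_smul, real_inner_smul_left]
    push_cast
    ring
  have hφ'_le : ∀ t ∈ Ico (0 : ℝ) 1, ‖φ' t‖ ≤ M * ‖h‖ ^ 3 := by
    rintro t ⟨ht₀, ht₁⟩
    have hrem := norm_sub_sub_fderiv_le_of_lipschitz_fderiv hM hf' hlip x (x + t • h)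
    rw [add_sub_cancel_left, norm_smul, Real.norm_of_nonneg ht₀] at hrem
    calc ‖φ' t‖ ≤ ‖gradient f (x + t • h) - gradient f x - H (t • h)‖ * ‖h‖ :=
          norm_inner_le_norm _ _
      _ ≤ M * (t * ‖h‖) ^ 2 * ‖h‖ := by gcongr
      _ ≤ M * (1 * ‖h‖) ^ 2 * ‖h‖ := by gcongr
      _ = M * ‖h‖ ^ 3 := by ring
  have hmvt := norm_image_sub_le_of_norm_deriv_le_segment_01'
    (fun t _ => (hφ' t).hasDerivWithinAt) hφ'_le
  simp only [φ, one_smul, zero_smul, add_zero, add_sub_cancel, one_pow, one_mul, zero_mul,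
    sub_zero, h] at hmvt
  rw [Real.norm_eq_abs] at hmvt
  convert hmvt using 2
  ring

theorem mul_norm_sq_le_inner_fderiv_gradient {γ M : ℝ} (hM : 0 ≤ M)
    (hf : Differentiable ℝ f) (hf' : Differentiable ℝ (gradient f))
    (hlip : ∀ x y, ‖fderiv ℝ (gradient f) x - fderiv ℝ (gradient f) y‖ ≤ M * ‖x - y‖)
    (hsc : ∀ x y, f x + ⟪gradient f x, y - x⟫ + γ / 2 * ‖y - x‖ ^ 2 ≤ f y) (x h : E) :
    γ * ‖h‖ ^ 2 ≤ ⟪fderiv ℝ (gradient f) x h, h⟫ := by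
  set q := ⟪fderiv ℝ (gradient f) x h, h⟫
  -- Along `x + t • h`, strong convexity and the Taylor bound squeeze the non-affine part of `f`
  -- between `γ t² ‖h‖² / 2` and `t² q / 2 + M t³ ‖h‖³`; divide by `t²` and let `t → 0⁺`.
  have hsqueeze : ∀ t > 0, γ * ‖h‖ ^ 2 ≤ q + 2 * M * ‖h‖ ^ 3 * t := by
    intro t ht
    have hlower := hsc x (x + t • h)
    have hupper := (abs_le.mp
      (abs_sub_sub_inner_gradient_sub_inner_fderiv_gradient_le hM hf hf' hlip x (x + t • h))).2
    simp only [add_sub_cancel_left, map_smul, real_inner_smul_left, real_inner_smul_right,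
      norm_smul, Real.norm_of_nonneg ht.le] at hlower hupper
    have : t ^ 2 * (γ * ‖h‖ ^ 2) ≤ t ^ 2 * (q + 2 * M * ‖h‖ ^ 3 * t) := by nlinarith
    exact le_of_mul_le_mul_left this (by positivity)
  have hlim : Tendsto (fun t => q + 2 * M * ‖h‖ ^ 3 * t) (𝓝[>] 0) (𝓝 q) := by
    have : Tendsto (fun t => q + 2 * M * ‖h‖ ^ 3 * t) (𝓝 0) (𝓝 (q + 2 * M * ‖h‖ ^ 3 * 0)) :=
      (continuous_const.add (continuous_const.mul continuous_id)).tendsto 0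
    simpa using this.mono_left nhdsWithin_le_nhds
  exact ge_of_tendsto hlim (eventually_nhdsWithin_of_forall hsqueeze)

end Gradient

theorem pow_three_le_rpow_three_halves {a r : ℝ} (ha : 0 ≤ a) (h : a ^ 2 ≤ r) :
    a ^ 3 ≤ r ^ ((3 : ℝ) / 2) := by
  calc a ^ 3 = (a ^ 2) ^ ((3 : ℝ) / 2) := by
        rw [← Real.rpow_natCast a 2, ← Real.rpow_mul ha, ← Real.rpow_natCast a 3]
        norm_num
    _ ≤ r ^ ((3 : ℝ) / 2) := by gcongr

theorem stmt13_general {d : ℕ}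
    (L : EuclideanSpace ℝ (Fin d) → ℝ) (hL : ContDiff ℝ 2 L)
    (γ M : ℝ) (hγ : 0 < γ) (hM : 0 ≤ M)
    (hsc : ∀ θ θ' : EuclideanSpace ℝ (Fin d),
      L θ + ⟪gradient L θ, θ' - θ⟫ + γ / 2 * ‖θ' - θ‖ ^ 2 ≤ L θ')
    (hlip : ∀ θ θ' : EuclideanSpace ℝ (Fin d),
      ‖fderiv ℝ (gradient L) θ - fderiv ℝ (gradient L) θ'‖ ≤ M * ‖θ - θ'‖)
    (θhat : EuclideanSpace ℝ (Fin d)) (hmin : ∀ θ, L θhat ≤ L θ)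
    (τ : ℝ) :
    {θ : EuclideanSpace ℝ (Fin d) | L θ - L θhat ≤ τ} ⊆
      {θ : EuclideanSpace ℝ (Fin d) |
        ⟪gradient L θhat, θ - θhat⟫
          + 1 / 2 * ⟪fderiv ℝ (gradient L) θhat (θ - θhat), θ - θhat⟫
          ≤ τ + M * (2 * τ / γ) ^ ((3 : ℝ) / 2)}
    ∧ {θ : EuclideanSpace ℝ (Fin d) |
        ⟪gradient L θhat, θ - θhat⟫
          + 1 / 2 * ⟪fderiv ℝ (gradient L) θhat (θ - θhat), θ - θhat⟫
          ≤ τ} ⊆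
      {θ : EuclideanSpace ℝ (Fin d) |
        L θ - L θhat ≤ τ + M * (2 * τ / γ) ^ ((3 : ℝ) / 2)} := by
  have hL₁ : Differentiable ℝ L := hL.differentiable two_ne_zero
  have hgrad : gradient L θhat = 0 := IsLocalMin.gradient_eq_zero (.of_forall hmin)
  have htaylor θ := abs_le.mp
    (abs_sub_sub_inner_gradient_sub_inner_fderiv_gradient_le hM hL₁ hL.differentiable_gradient
      hlip θhat θ)
  have hcube θ (hθ : γ * ‖θ - θhat‖ ^ 2 ≤ 2 * τ) :
      M * ‖θ - θhat‖ ^ 3 ≤ M * (2 * τ / γ) ^ ((3 : ℝ) / 2) := by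
    gcongr
    exact pow_three_le_rpow_three_halves (norm_nonneg _) (by rwa [le_div_iff₀' hγ])
  refine ⟨fun θ (hθ : L θ - L θhat ≤ τ) => ?_, fun θ hθ => ?_⟩
  · have hconv := hsc θhat θ
    rw [hgrad, inner_zero_left] at hconv
    have := hcube θ (by linarith)
    simp only [mem_ofPred_eq]
    linarith [(htaylor θ).1]
  · have hhess := mul_norm_sq_le_inner_fderiv_gradient hM hL₁ hL.differentiable_gradient hlip
      hsc θhat (θ - θhat)
    simp only [mem_ofPred_eq, hgrad, inner_zero_left] at hθ htaylor ⊢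
    have := hcube θ (by linarith)
    linarith [(htaylor θ).2]

/-- part of Lemma 6 of the supplement: for a twice continuously
differentiable, `γ`-strongly convex `L : ℝ^d → ℝ` whose Hessian is
`M`-Lipschitz in operator norm, with global minimizer `θ̂`, the sublevel set
`ℒ_τ` of `L − L(θ̂)` and the sublevel set `Q_τ` of the second-order Taylor
expansion of `L` at `θ̂` satisfy `ℒ_τ ⊆ Q_{τ+ζ}` and `Q_τ ⊆ ℒ_{τ+ζ}` where
`ζ = M (2τ/γ)^{3/2}`. -/
theorem stmt13 {d : ℕ}
    (L : EuclideanSpace ℝ (Fin d) → ℝ) (hL : ContDiff ℝ 2 L)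
    (γ M : ℝ) (hγ : 0 < γ) (hM : 0 ≤ M)
    (hsc : ∀ θ θ' : EuclideanSpace ℝ (Fin d),
      L θ + ⟪gradient L θ, θ' - θ⟫ + γ / 2 * ‖θ' - θ‖ ^ 2 ≤ L θ')
    (hlip : ∀ θ θ' : EuclideanSpace ℝ (Fin d),
      ‖fderiv ℝ (gradient L) θ - fderiv ℝ (gradient L) θ'‖ ≤ M * ‖θ - θ'‖)
    (θhat : EuclideanSpace ℝ (Fin d)) (hmin : ∀ θ, L θhat ≤ L θ)
    (τ : ℝ) (hτ : 0 ≤ τ) :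
    {θ : EuclideanSpace ℝ (Fin d) | L θ - L θhat ≤ τ} ⊆
      {θ : EuclideanSpace ℝ (Fin d) |
        ⟪gradient L θhat, θ - θhat⟫
          + 1 / 2 * ⟪fderiv ℝ (gradient L) θhat (θ - θhat), θ - θhat⟫
          ≤ τ + M * (2 * τ / γ) ^ ((3 : ℝ) / 2)}
    ∧ {θ : EuclideanSpace ℝ (Fin d) |
        ⟪gradient L θhat, θ - θhat⟫
          + 1 / 2 * ⟪fderiv ℝ (gradient L) θhat (θ - θhat), θ - θhat⟫
          ≤ τ} ⊆
      {θ : EuclideanSpace ℝ (Fin d) |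
        L θ - L θhat ≤ τ + M * (2 * τ / γ) ^ ((3 : ℝ) / 2)} :=
  stmt13_general L hL γ M hγ hM hsc hlip θhat hmin τ
end
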